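/- A bounded operator T on a Banach space has finite descent if and only if there exists m ≥ 0 such that Ran(T) + ker(T^m) = X. (Kaashoek–Taylor criterion for descent.) -/

import Mathlib

/-- Kaashoek–Taylor criterion for descent: a bounded operator `T` on a complex Banach
space has finite descent iff `Ran T + ker (T^m) = X` for some `m ≥ 0`. -/
theorem finite_descent_iff_range_sup_ker_eq_top
    {X : Type*} [NormedAddCommGroup X] [NormedSpace ℂ X] [CompleteSpace X]
    (T : X →L[ℂ] X) :
    (∃ m : ℕ, LinearMap.range ((T ^ m : X →L[ℂ] X) : X →ₗ[ℂ] X) = LinearMap.range ((T ^ (m + 1) : X →L[ℂ] X) : X →ₗ[ℂ] X)) ↔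
      (∃ m : ℕ, LinearMap.range (T : X →ₗ[ℂ] X) ⊔ LinearMap.ker ((T ^ m : X →L[ℂ] X) : X →ₗ[ℂ] X) = ⊤) := by
  constructor
  · rintro ⟨m, hm⟩
    refine ⟨m, eq_top_iff.mpr fun x _ => ?_⟩
    have hx : (T ^ m) x ∈ LinearMap.range ((T ^ (m + 1) : X →L[ℂ] X) : X →ₗ[ℂ] X) := hm ▸ ⟨x, rfl⟩
    obtain ⟨y, hy⟩ := hx
    refine Submodule.mem_sup.mpr ⟨T y, ⟨y, rfl⟩, x - T y, ?_, by abel⟩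
    have : (T ^ m) (T y) = (T ^ (m + 1)) y := by
      rw [pow_succ]; rfl
    rw [LinearMap.mem_ker]; change (T ^ m) (x - T y) = 0; rw [map_sub, this]; exact sub_eq_zero.mpr hy.symm
  · rintro ⟨m, hm⟩
    refine ⟨m, le_antisymm ?_ ?_⟩
    · rintro _ ⟨x, rfl⟩
      have hx : x ∈ LinearMap.range (T : X →ₗ[ℂ] X) ⊔ LinearMap.ker ((T ^ m : X →L[ℂ] X) : X →ₗ[ℂ] X) := hm ▸ trivial
      obtain ⟨u, hu, v, hv, rfl⟩ := Submodule.mem_sup.mp hx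
      obtain ⟨y, rfl⟩ := hu
      refine ⟨y, ?_⟩
      have hv' : (T ^ m) v = 0 := hv
      have : (T ^ (m + 1)) y = (T ^ m) (T y) := by rw [pow_succ]; rfl
      simp [this, map_add, hv', -ContinuousLinearMap.toLinearMap_pow]
    · rintro _ ⟨x, rfl⟩
      exact ⟨T x, by rw [pow_succ]; rfl⟩
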